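/- arXiv:1505.03247 — 2 statements merged into one kernel-verified Lean document; each statement's English description precedes it below -/
import Mathlib

section
/- Let a power network point satisfy the reactive power balance constraint (2-b) at every bus. Then for every line e = (i₀,j₀) ∈ L and every real ε, the ε-perturbation of the point along e also satisfies the reactive power balance constraint (2-b) at every bus. -/
open Finset

variable {B : Type*}

/-- Perturbed squared current magnitudes: `l̄ e₀ = l e₀ - ε`, unchanged elsewhere. -/
noncomputable def lBar [DecidableEq B] (l : B × B → ℝ) (e₀ : B × B) (ε : ℝ) : B × B → ℝ :=
  fun e => if e = e₀ then l e - ε else l e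

/-- Perturbed active branch flows: `F̄ e₀ = F e₀ - r e₀ * ε / 2`, unchanged elsewhere. -/
noncomputable def FBar [DecidableEq B] (r F : B × B → ℝ) (e₀ : B × B) (ε : ℝ) : B × B → ℝ :=
  fun e => if e = e₀ then F e - r e₀ * ε / 2 else F e

/-- Perturbed reactive branch flows: `H̄ e₀ = H e₀ - x e₀ * ε / 2`, unchanged elsewhere. -/
noncomputable def HBar [DecidableEq B] (x H : B × B → ℝ) (e₀ : B × B) (ε : ℝ) : B × B → ℝ :=
  fun e => if e = e₀ then H e - x e₀ * ε / 2 else H e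

/-- Perturbed active loads: increased by `r e₀ * ε / 2` at the endpoints of `e₀`. -/
noncomputable def PcBar [DecidableEq B] (r : B × B → ℝ) (Pc : B → ℝ) (e₀ : B × B) (ε : ℝ) :
    B → ℝ :=
  fun i => if i = e₀.1 ∨ i = e₀.2 then Pc i + r e₀ * ε / 2 else Pc i

/-- Perturbed reactive loads: increased by `x e₀ * ε / 2` at the endpoints of `e₀`. -/
noncomputable def QcBar [DecidableEq B] (x : B × B → ℝ) (Qc : B → ℝ) (e₀ : B × B) (ε : ℝ) :
    B → ℝ :=
  fun i => if i = e₀.1 ∨ i = e₀.2 then Qc i + x e₀ * ε / 2 else Qc i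

/-- Active power balance constraint (2-a) at every bus. -/
def Con2a [DecidableEq B] (L : Finset (B × B)) (r : B × B → ℝ)
    (Pg Pc : B → ℝ) (l F : B × B → ℝ) : Prop :=
  ∀ i : B, Pg i - Pc i =
    (∑ e ∈ L.filter (fun e => e.1 = i), F e) -
      ∑ e ∈ L.filter (fun e => e.2 = i), (F e - r e * l e)

/-- Reactive power balance constraint (2-b) at every bus. -/
def Con2b [DecidableEq B] (L : Finset (B × B)) (x : B × B → ℝ)
    (Qg Qc : B → ℝ) (l H : B × B → ℝ) : Prop :=
  ∀ i : B, Qg i - Qc i =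
    (∑ e ∈ L.filter (fun e => e.1 = i), H e) -
      ∑ e ∈ L.filter (fun e => e.2 = i), (H e - x e * l e)

/-- Voltage drop constraint (2-c) on every line. -/
def Con2c (L : Finset (B × B)) (r x : B × B → ℝ)
    (v : B → ℝ) (l F H : B × B → ℝ) : Prop :=
  ∀ e ∈ L, v e.2 = v e.1 - 2 * (r e * F e + x e * H e) + (r e ^ 2 + x e ^ 2) * l e

/-- Conic (relaxed) constraint (4-c) on every line. -/
def Con4c (L : Finset (B × B)) (v : B → ℝ) (l F H : B × B → ℝ) : Prop :=
  ∀ e ∈ L, l e * v e.1 ≥ F e ^ 2 + H e ^ 2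

/-- Exact quadratic constraint (2-d) on every line. -/
def Con2d (L : Finset (B × B)) (v : B → ℝ) (l F H : B × B → ℝ) : Prop :=
  ∀ e ∈ L, l e * v e.1 = F e ^ 2 + H e ^ 2

/-- the ε-perturbation along a line `e₀ ∈ L` preserves the reactive power
balance constraint (2-b) at every bus. -/
theorem perturbation_preserves_2b [DecidableEq B]
    (L : Finset (B × B)) (hL : ∀ e ∈ L, e.1 ≠ e.2) (r x : B × B → ℝ)
    (v Pg Qg Pc Qc : B → ℝ) (l F H : B × B → ℝ)
    (h2b : Con2b L x Qg Qc l H)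
    (e₀ : B × B) (he₀ : e₀ ∈ L) (ε : ℝ) :
    Con2b L x Qg (QcBar x Qc e₀ ε) (lBar l e₀ ε) (HBar x H e₀ ε) := by
  intro i
  have key : ∀ (s : Finset (B × B)) (g : (B × B) → ℝ) (c : ℝ),
      (∑ e ∈ s, (g e - if e = e₀ then c else 0)) =
        (∑ e ∈ s, g e) - (if e₀ ∈ s then c else 0) := by
    intro s g c
    rw [Finset.sum_sub_distrib, Finset.sum_ite_eq' s e₀ (fun _ => c)]
  have h1 : (∑ e ∈ L.filter (fun e => e.1 = i), HBar x H e₀ ε e) =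
      (∑ e ∈ L.filter (fun e => e.1 = i), H e) -
        (if e₀.1 = i then x e₀ * ε / 2 else 0) := by
    rw [show (∑ e ∈ L.filter (fun e => e.1 = i), HBar x H e₀ ε e) =
        ∑ e ∈ L.filter (fun e => e.1 = i),
          (H e - if e = e₀ then x e₀ * ε / 2 else 0) from
      Finset.sum_congr rfl (by intro e _; simp [HBar]; split_ifs <;> simp)]
    rw [key]
    congr 1
    simp [Finset.mem_filter, he₀]
  have h2 : (∑ e ∈ L.filter (fun e => e.2 = i),
        (HBar x H e₀ ε e - x e * lBar l e₀ ε e)) =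
      (∑ e ∈ L.filter (fun e => e.2 = i), (H e - x e * l e)) -
        (if e₀.2 = i then -(x e₀ * ε / 2) else 0) := by
    rw [show (∑ e ∈ L.filter (fun e => e.2 = i),
        (HBar x H e₀ ε e - x e * lBar l e₀ ε e)) =
        ∑ e ∈ L.filter (fun e => e.2 = i),
          ((H e - x e * l e) - if e = e₀ then -(x e₀ * ε / 2) else 0) from
      Finset.sum_congr rfl (by
        intro e _; simp only [HBar, lBar]; split_ifs with h
        · subst h; ring
        · ring)]
    rw [key]
    congr 1
    simp [Finset.mem_filter, he₀]
  rw [h1, h2]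
  have hne := hL e₀ he₀
  have hbal := h2b i
  simp only [QcBar]
  by_cases ha : e₀.1 = i <;> by_cases hb : e₀.2 = i
  · exact absurd (ha.trans hb.symm) hne
  · rw [if_pos (Or.inl ha.symm), if_pos ha, if_neg hb]; linarith
  · rw [if_pos (Or.inr hb.symm), if_neg ha, if_pos hb]; linarith
  · rw [if_neg (by tauto), if_neg ha, if_neg hb]; linarith
end

section
/- Let f be an objective function of (v, l, Pᵍ, Qᵍ, Pᶜ, Qᶜ) (independent of F and H) which is strictly increasing in l and non-increasing in Pᶜ and Qᶜ (in the pointwise sense). Let a power network point satisfy constraints (2-a), (2-b), (2-c) and the conic constraint (4-c) on every line, and suppose there is a line e = (i₀,j₀) with r_e ≥ 0 and x_e ≥ 0 on which (4-c) is strictly non-binding, i.e. l_e v_{i₀} > F_e² + H_e². Then there exists ε > 0 such that the ε-perturbation of the point along e satisfies constraints (2-a), (2-b), (2-c) and (4-c) on every line, satisfies P̄ᶜ ≥ Pᶜ and Q̄ᶜ ≥ Qᶜ pointwise, and has f-value strictly smaller than that of the original point. -/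
open Finset

variable {B : Type*}

private lemma sum_if_sub {α : Type*} [DecidableEq α] (s : Finset α) (b : α)
    (f : α → ℝ) (c : ℝ) :
    ∑ a ∈ s, (if a = b then f a - c else f a)
      = (∑ a ∈ s, f a) - (if b ∈ s then c else 0) := by
  have h : ∀ a, (if a = b then f a - c else f a) = f a - (if a = b then c else 0) := by
    intro a; split_ifs <;> ring
  simp_rw [h, Finset.sum_sub_distrib, Finset.sum_ite_eq' s b (fun _ => c)]

private lemma bal_perturb {B : Type*} [DecidableEq B] (L : Finset (B × B)) (e₀ : B × B)
    (he₀ : e₀ ∈ L) (hne : e₀.1 ≠ e₀.2) (r : B × B → ℝ) (Pg Pc : B → ℝ)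
    (l F : B × B → ℝ) (ε : ℝ)
    (h : ∀ i : B, Pg i - Pc i =
      (∑ e ∈ L.filter (fun e => e.1 = i), F e) -
        ∑ e ∈ L.filter (fun e => e.2 = i), (F e - r e * l e)) :
    ∀ i : B, Pg i - (if i = e₀.1 ∨ i = e₀.2 then Pc i + r e₀ * ε / 2 else Pc i) =
      (∑ e ∈ L.filter (fun e => e.1 = i), (if e = e₀ then F e - r e₀ * ε / 2 else F e)) -
        ∑ e ∈ L.filter (fun e => e.2 = i),
          ((if e = e₀ then F e - r e₀ * ε / 2 else F e)
            - r e * (if e = e₀ then l e - ε else l e)) := by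
  intro i
  have hout := sum_if_sub (L.filter (fun e => e.1 = i)) e₀ F (r e₀ * ε / 2)
  have hin' : ∑ e ∈ L.filter (fun e => e.2 = i),
      ((if e = e₀ then F e - r e₀ * ε / 2 else F e)
        - r e * (if e = e₀ then l e - ε else l e))
      = ∑ e ∈ L.filter (fun e => e.2 = i),
        (if e = e₀ then (F e - r e * l e) - (-(r e₀ * ε / 2)) else F e - r e * l e) := by
    refine Finset.sum_congr rfl (fun e _ => ?_)
    by_cases he : e = e₀
    · subst he; simp only [eq_self_iff_true, if_true]; ring
    · simp only [if_neg he]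
  rw [hout, hin', sum_if_sub]
  simp only [Finset.mem_filter, he₀, true_and]
  have hbal := h i
  by_cases hc1 : e₀.1 = i
  · have hc2 : ¬ e₀.2 = i := fun hh => hne (hc1.trans hh.symm)
    rw [if_pos hc1, if_neg hc2, if_pos (Or.inl hc1.symm)]
    linarith
  · by_cases hc2 : e₀.2 = i
    · rw [if_neg hc1, if_pos hc2, if_pos (Or.inr hc2.symm)]
      linarith
    · rw [if_neg hc1, if_neg hc2, if_neg (by rintro (hh | hh); exact hc1 hh.symm; exact hc2 hh.symm)]
      linarith

/-- if a point satisfies (2-a), (2-b), (2-c), (4-c) and the conic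
constraint is strictly non-binding on a line `e₀ ∈ L` with `r e₀ ≥ 0` and `x e₀ ≥ 0`,
then some ε-perturbation along `e₀` (with `ε > 0`) is again feasible for
(2-a), (2-b), (2-c), (4-c), does not decrease the loads, and strictly decreases
any objective `f` that is strictly increasing in `l` and non-increasing in `Pᶜ`, `Qᶜ`. -/
theorem nonbinding_line_gives_better_feasible_point [DecidableEq B]
    (L : Finset (B × B)) (hL : ∀ e ∈ L, e.1 ≠ e.2) (r x : B × B → ℝ)
    (f : (B → ℝ) → ((B × B) → ℝ) → (B → ℝ) → (B → ℝ) → (B → ℝ) → (B → ℝ) → ℝ)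
    (hf_l : ∀ (v : B → ℝ) (l l' : (B × B) → ℝ) (Pg Qg Pc Qc : B → ℝ),
      (∀ e, l' e ≤ l e) → l' ≠ l → f v l' Pg Qg Pc Qc < f v l Pg Qg Pc Qc)
    (hf_c : ∀ (v : B → ℝ) (l : (B × B) → ℝ) (Pg Qg Pc Qc Pc' Qc' : B → ℝ),
      (∀ i, Pc i ≤ Pc' i) → (∀ i, Qc i ≤ Qc' i) →
      f v l Pg Qg Pc' Qc' ≤ f v l Pg Qg Pc Qc)
    (v Pg Qg Pc Qc : B → ℝ) (l F H : B × B → ℝ)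
    (h2a : Con2a L r Pg Pc l F) (h2b : Con2b L x Qg Qc l H)
    (h2c : Con2c L r x v l F H) (h4c : Con4c L v l F H)
    (e₀ : B × B) (he₀ : e₀ ∈ L) (hr : r e₀ ≥ 0) (hx : x e₀ ≥ 0)
    (hstrict : l e₀ * v e₀.1 > F e₀ ^ 2 + H e₀ ^ 2) :
    ∃ ε > (0 : ℝ),
      Con2a L r Pg (PcBar r Pc e₀ ε) (lBar l e₀ ε) (FBar r F e₀ ε) ∧
      Con2b L x Qg (QcBar x Qc e₀ ε) (lBar l e₀ ε) (HBar x H e₀ ε) ∧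
      Con2c L r x v (lBar l e₀ ε) (FBar r F e₀ ε) (HBar x H e₀ ε) ∧
      Con4c L v (lBar l e₀ ε) (FBar r F e₀ ε) (HBar x H e₀ ε) ∧
      (∀ i : B, Pc i ≤ PcBar r Pc e₀ ε i) ∧ (∀ i : B, Qc i ≤ QcBar x Qc e₀ ε i) ∧
      f v (lBar l e₀ ε) Pg Qg (PcBar r Pc e₀ ε) (QcBar x Qc e₀ ε) <
        f v l Pg Qg Pc Qc := by
  have hne : e₀.1 ≠ e₀.2 := hL e₀ he₀
  set A : ℝ := r e₀ * F e₀ + x e₀ * H e₀ - v e₀.1 with hA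
  have hδ : (0:ℝ) < l e₀ * v e₀.1 - (F e₀ ^ 2 + H e₀ ^ 2) := by linarith
  have hM : (0:ℝ) < |A| + (r e₀ ^ 2 + x e₀ ^ 2) / 4 + 1 := by positivity
  set ε : ℝ := min 1 ((l e₀ * v e₀.1 - (F e₀ ^ 2 + H e₀ ^ 2)) / (|A| + (r e₀ ^ 2 + x e₀ ^ 2) / 4 + 1)) with hεdef
  have hε : 0 < ε := lt_min one_pos (div_pos hδ hM)
  have hε1 : ε ≤ 1 := min_le_left _ _
  have hεM : ε * (|A| + (r e₀ ^ 2 + x e₀ ^ 2) / 4 + 1) ≤ l e₀ * v e₀.1 - (F e₀ ^ 2 + H e₀ ^ 2) := by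
    rw [← le_div_iff₀ hM]
    exact min_le_right _ _
  refine ⟨ε, hε, ?_, ?_, ?_, ?_, ?_, ?_, ?_⟩
  · exact bal_perturb L e₀ he₀ hne r Pg Pc l F ε h2a
  · exact bal_perturb L e₀ he₀ hne x Qg Qc l H ε h2b
  · intro e he
    have := h2c e he
    by_cases h : e = e₀
    · subst h
      simp only [lBar, FBar, HBar, eq_self_iff_true, if_true]
      linear_combination this
    · simp only [lBar, FBar, HBar, if_neg h]
      exact this
  · intro e he
    by_cases h : e = e₀
    · subst h
      simp only [lBar, FBar, HBar, eq_self_iff_true, if_true, ge_iff_le]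
      have h1 : 0 ≤ ε * (A + |A|) := mul_nonneg hε.le (by linarith [neg_abs_le A])
      have h2 : 0 ≤ ε * (1 - ε) * (r e ^ 2 + x e ^ 2) :=
        mul_nonneg (mul_nonneg hε.le (by linarith)) (by positivity)
      nlinarith [h1, h2, hεM, hε, abs_nonneg A]
    · simp only [lBar, FBar, HBar, if_neg h]
      exact h4c e he
  · intro i
    simp only [PcBar]
    split_ifs
    · nlinarith [mul_nonneg hr hε.le]
    · exact le_rfl
  · intro i
    simp only [QcBar]
    split_ifs
    · nlinarith [mul_nonneg hx hε.le]
    · exact le_rfl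
  · have hle : ∀ e, lBar l e₀ ε e ≤ l e := by
      intro e; simp only [lBar]; split_ifs <;> linarith
    have hne' : lBar l e₀ ε ≠ l := by
      intro hh
      have := congrFun hh e₀
      simp only [lBar, eq_self_iff_true, if_true] at this
      linarith
    calc f v (lBar l e₀ ε) Pg Qg (PcBar r Pc e₀ ε) (QcBar x Qc e₀ ε)
        ≤ f v (lBar l e₀ ε) Pg Qg Pc Qc := by
          refine hf_c v _ Pg Qg Pc Qc _ _ ?_ ?_
          · intro i; simp only [PcBar]; split_ifs
            · nlinarith [mul_nonneg hr hε.le]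
            · exact le_rfl
          · intro i; simp only [QcBar]; split_ifs
            · nlinarith [mul_nonneg hx hε.le]
            · exact le_rfl
      _ < f v l Pg Qg Pc Qc := hf_l v l (lBar l e₀ ε) Pg Qg Pc Qc hle hne'
end
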